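/- Let a = 0, b = 1, so the Riccati equation is μ̇(t) = μ²(t) + (−1)·μ(t) + α, i.e. μ̇ = μ² − μ + α, with μ(0) = m₀ ∈ [0, 1/2]. If 0 < α ≤ 1/4, then the solution μ(t) exists for all t ≥ 0 and satisfies 0 ≤ μ(t) ≤ 1/2 for all t ≥ 0. -/

import Mathlib

/-!
Shifting by the centre `1/2` of the roots turns the equation into `v' = v² - δ²` with
`δ = √(1/4 - α)`, which the Riccati substitution `v = N / D` linearizes to `N' = -δ² D`,
`D' = -N`. Solving with `cosh (δ t)` and `sinh (δ t) / δ` gives closed forms for `v + δ` and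
`v - v₀` showing that `v (t)` stays between `v₀` and the stable equilibrium `-δ`; both lie in
`[-1/2, 0]`.
-/

open Real Set

theorem HasDerivAt.div_of_linear_system {N D : ℝ → ℝ} {c t : ℝ}
    (hN : HasDerivAt N (-(c * D t)) t) (hD : HasDerivAt D (-N t) t) (hDt : D t ≠ 0) :
    HasDerivAt (fun s => N s / D s) ((N t / D t) ^ 2 - c) t := by
  refine (hN.div hD hDt).congr_deriv ?_
  field_simp
  ring

/-- `C, S` play the role of `cosh (δ t)` and `sinh (δ t) / δ`, including the limit case `δ = 0`. -/
structure CoshSinhPair (δ : ℝ) (C S : ℝ → ℝ) : Prop where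
  C_zero : C 0 = 1
  S_zero : S 0 = 0
  hasDerivAt_C : ∀ t, HasDerivAt C (δ ^ 2 * S t) t
  hasDerivAt_S : ∀ t, HasDerivAt S (C t) t
  S_nonneg : ∀ t, 0 ≤ t → 0 ≤ S t
  C_sub_mul_S : ∀ t, C t - δ * S t = exp (-(δ * t))

theorem exists_coshSinhPair {δ : ℝ} (hδ : 0 ≤ δ) : ∃ C S, CoshSinhPair δ C S := by
  rcases hδ.eq_or_lt with rfl | hδ
  · refine ⟨fun _ => 1, id, ?_, ?_, fun t => ?_, hasDerivAt_id, fun t ht => ht, fun t => ?_⟩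
    all_goals simp [hasDerivAt_const]
  · refine ⟨fun t => cosh (δ * t), fun t => sinh (δ * t) / δ, by simp, by simp,
      fun t => ?_, fun t => ?_, fun t ht => by positivity, fun t => ?_⟩
    · exact (hasDerivAt_const_mul (x := t) δ).cosh.congr_deriv (by field_simp)
    · exact ((hasDerivAt_const_mul (x := t) δ).sinh.div_const δ).congr_deriv (by field_simp)
    · rw [mul_div_cancel₀ _ hδ.ne', cosh_sub_sinh]

/-- The solution of `v' = v² - δ²`, `v 0 = v₀`, in linearized form. -/
noncomputable def riccatiRatio (δ v₀ : ℝ) (C S : ℝ → ℝ) (t : ℝ) : ℝ :=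
  (v₀ * C t - δ ^ 2 * S t) / (C t - v₀ * S t)

namespace CoshSinhPair

variable {δ v₀ : ℝ} {C S : ℝ → ℝ} (h : CoshSinhPair δ C S)
include h

theorem riccatiRatio_zero : riccatiRatio δ v₀ C S 0 = v₀ := by
  simp [riccatiRatio, h.C_zero, h.S_zero]

theorem denom_pos (hv₀ : v₀ ≤ δ) {t : ℝ} (ht : 0 ≤ t) :
    0 < C t - v₀ * S t := by
  have hS := h.S_nonneg t ht
  have := h.C_sub_mul_S t
  nlinarith [exp_pos (-(δ * t))]

theorem hasDerivAt_riccatiRatio (hv₀ : v₀ ≤ δ) {t : ℝ} (ht : 0 ≤ t) :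
    HasDerivAt (riccatiRatio δ v₀ C S) (riccatiRatio δ v₀ C S t ^ 2 - δ ^ 2) t := by
  have hC := h.hasDerivAt_C t
  have hS := h.hasDerivAt_S t
  refine HasDerivAt.div_of_linear_system ?_ ?_ (h.denom_pos hv₀ ht).ne'
  · exact ((hC.const_mul v₀).sub (hS.const_mul (δ ^ 2))).congr_deriv (by ring)
  · exact (hC.sub (hS.const_mul v₀)).congr_deriv (by ring)

theorem riccatiRatio_add (hv₀ : v₀ ≤ δ) {t : ℝ} (ht : 0 ≤ t) :
    riccatiRatio δ v₀ C S t + δ = (v₀ + δ) * exp (-(δ * t)) / (C t - v₀ * S t) := by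
  rw [riccatiRatio, ← h.C_sub_mul_S t]
  field_simp [(h.denom_pos hv₀ ht).ne']
  ring

theorem riccatiRatio_sub (hv₀ : v₀ ≤ δ) {t : ℝ} (ht : 0 ≤ t) :
    riccatiRatio δ v₀ C S t - v₀ = (v₀ + δ) * (v₀ - δ) * S t / (C t - v₀ * S t) := by
  rw [riccatiRatio]
  field_simp [(h.denom_pos hv₀ ht).ne']
  ring

theorem riccatiRatio_mem_uIcc (hv₀ : v₀ ≤ δ) {t : ℝ} (ht : 0 ≤ t) :
    riccatiRatio δ v₀ C S t ∈ uIcc v₀ (-δ) := by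
  have hD := h.denom_pos hv₀ ht
  have hS := h.S_nonneg t ht
  have hadd := h.riccatiRatio_add hv₀ ht
  have hsub := h.riccatiRatio_sub hv₀ ht
  rcases le_total 0 (v₀ + δ) with hpos | hneg
  · rw [uIcc_of_ge (by linarith)]
    constructor
    · have : 0 ≤ (v₀ + δ) * exp (-(δ * t)) / (C t - v₀ * S t) := by positivity
      linarith
    · have : (v₀ + δ) * (v₀ - δ) * S t / (C t - v₀ * S t) ≤ 0 :=
        div_nonpos_of_nonpos_of_nonneg
          (mul_nonpos_of_nonpos_of_nonneg (mul_nonpos_of_nonneg_of_nonpos hpos (by linarith)) hS)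
          hD.le
      linarith
  · rw [uIcc_of_le (by linarith)]
    constructor
    · have : 0 ≤ (v₀ + δ) * (v₀ - δ) * S t / (C t - v₀ * S t) :=
        div_nonneg (mul_nonneg (mul_nonneg_of_nonpos_of_nonpos hneg (by linarith)) hS) hD.le
      linarith
    · have : (v₀ + δ) * exp (-(δ * t)) / (C t - v₀ * S t) ≤ 0 :=
        div_nonpos_of_nonpos_of_nonneg (mul_nonpos_of_nonpos_of_nonneg hneg (exp_pos _).le) hD.le
      linarith

end CoshSinhPair

theorem stmt_5 (α m₀ : ℝ) (hα : 0 < α) (hα' : α ≤ 1 / 4)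
    (hm₀ : m₀ ∈ Set.Icc (0 : ℝ) (1 / 2)) :
    ∃ μ : ℝ → ℝ, μ 0 = m₀ ∧
      (∀ t ≥ (0 : ℝ), HasDerivAt μ (μ t ^ 2 - μ t + α) t) ∧
      (∀ t ≥ (0 : ℝ), 0 ≤ μ t ∧ μ t ≤ 1 / 2) := by
  set δ := √(1 / 4 - α)
  have hδ : 0 ≤ δ := sqrt_nonneg _
  have hδ_sq : δ ^ 2 = 1 / 4 - α := sq_sqrt (by linarith)
  have hδ_le : δ ≤ 1 / 2 := by nlinarith
  have hv₀ : m₀ - 1 / 2 ≤ δ := by linarith [hm₀.2]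
  obtain ⟨C, S, h⟩ := exists_coshSinhPair hδ
  refine ⟨fun t => 1 / 2 + riccatiRatio δ (m₀ - 1 / 2) C S t, ?_, fun t ht => ?_, fun t ht => ?_⟩
  · simp [h.riccatiRatio_zero]
  · refine ((h.hasDerivAt_riccatiRatio hv₀ ht).const_add (1 / 2)).congr_deriv ?_
    rw [hδ_sq]
    ring
  · obtain ⟨hlo, hhi⟩ := uIcc_subset_Icc (a₂ := -(1 / 2)) (b₂ := 0)
      ⟨by linarith [hm₀.1], by linarith [hm₀.2]⟩ ⟨by linarith, by linarith⟩
      (h.riccatiRatio_mem_uIcc hv₀ ht)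
    constructor <;> linarith
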